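/- Fix n ≥ 2, σ > 0, and let Y = μ + ε where μ ∈ ℝⁿ and ε₁,…,ε_n are independent centered Gaussian variables of variance σ². For λ ≥ 0 let β̂^F(y, λ) be the unique minimizer of (1/2)Σ_{i=1}^n (y_i − β_i)² + λ Σ_{i=1}^{n−1}|β_i − β_{i+1}|, and let K^F(y, λ) = 1 + #{i ∈ {1,…,n−1} : β̂^F(y, λ)_i ≠ β̂^F(y, λ)_{i+1}} be the number of fused groups; define β̂^{FNI}(y, λ_F, λ_NI) and K^{FNI}(y, λ_F, λ_NI) analogously with objective (1/2)Σ(y_i − β_i)² + λ_F Σ|β_i − β_{i+1}| + λ_NI Σ max(β_i − β_{i+1}, 0). Assume (the known degrees-of-freedom result for the fusion estimator) that for every μ' ∈ ℝⁿ and every λ ≥ 0, with Y' = μ' + ε, all relevant random variables are square-integrable, K^F(Y', λ) is integrable, and E[K^F(Y', λ)] = (1/σ²) Σ_{i=1}^n Cov[β̂^F_i(Y', λ), Y'_i]. Then for all λ_F ≥ 0, λ_NI ≥ 0, E[K^{FNI}(Y, λ_F, λ_NI)] = (1/σ²) Σ_{i=1}^n Cov[β̂^{FNI}_i(Y, λ_F,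 λ_NI), Y_i]; i.e. the number of fused groups is an unbiased estimator of the degrees of freedom of the fused nearly-isotonic estimator. -/

import Mathlib

/-!
Since `max x 0 = (x + |x|) / 2` and the differences `βᵢ - βᵢ₊₁` telescope to `⟪Dᵀ1, β⟫`, the
nearly-isotonic penalty is half a fusion penalty plus a linear term in `β`, and the linear term is
absorbed into the quadratic loss by shifting the data by `(λ_NI / 2) Dᵀ1`. So up to a constant the
fused nearly-isotonic objective at `y` is the fusion objective at level `λ_F + λ_NI / 2` and data
`y - (λ_NI / 2) Dᵀ1`. Its minimizer is unique by strict convexity, hence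
`β̂^FNI(Y) = β̂^F(Y')` with `Y' = μ' + ε` for the shifted mean `μ'`: the group counts coincide, and
the covariances coincide because `Y` and `Y'` differ by a constant vector.
-/

open Finset MeasureTheory ProbabilityTheory

/-- The one-dimensional fused lasso nearly-isotonic objective
`F(β) = (1/2)Σᵢ(yᵢ−βᵢ)² + λ_F Σᵢ|βᵢ−βᵢ₊₁| + λ_L Σᵢ|βᵢ| + λ_NI Σᵢ max(βᵢ−βᵢ₊₁,0)`. -/
noncomputable def flni1 {n : ℕ} (y : Fin (n + 1) → ℝ) (lF lL lNI : ℝ)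
    (β : Fin (n + 1) → ℝ) : ℝ :=
  (1 / 2) * ∑ i, (y i - β i) ^ 2
    + lF * ∑ i : Fin n, |β i.castSucc - β i.succ|
    + lL * ∑ i, |β i|
    + lNI * ∑ i : Fin n, max (β i.castSucc - β i.succ) 0

/-- `Cov[U, V] = E[UV] − E[U]E[V]`. -/
noncomputable def cov {Ω : Type*} [MeasureSpace Ω] (U V : Ω → ℝ) : ℝ :=
  (∫ ω, U ω * V ω) - (∫ ω, U ω) * (∫ ω, V ω)

lemma abs_add_div_two_le (u v : ℝ) : |(u + v) / 2| ≤ (|u| + |v|) / 2 := by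
  rw [abs_div, abs_two]
  linarith [abs_add_le u v]

lemma max_add_div_two_zero_le (u v : ℝ) :
    max ((u + v) / 2) 0 ≤ (max u 0 + max v 0) / 2 := by
  rcases le_total ((u + v) / 2) 0 with h | h
  · rw [max_eq_right h]; positivity
  · rw [max_eq_left h]; linarith [le_max_left u 0, le_max_left v 0]

lemma flni1_midpoint_add_le {n : ℕ} (y : Fin (n + 1) → ℝ) {lF lL lNI : ℝ}
    (hlF : 0 ≤ lF) (hlL : 0 ≤ lL) (hlNI : 0 ≤ lNI) (a b : Fin (n + 1) → ℝ) :
    flni1 y lF lL lNI (fun i => (a i + b i) / 2) + (1 / 8) * ∑ i, (a i - b i) ^ 2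
      ≤ (flni1 y lF lL lNI a + flni1 y lF lL lNI b) / 2 := by
  have hloss : ∑ i, (y i - (a i + b i) / 2) ^ 2 + (1 / 4) * ∑ i, (a i - b i) ^ 2
      = (∑ i, (y i - a i) ^ 2 + ∑ i, (y i - b i) ^ 2) / 2 := by
    rw [mul_sum, ← sum_add_distrib, ← sum_add_distrib, sum_div]
    exact sum_congr rfl fun i _ => by ring
  have hfuse : ∑ i : Fin n, |(a i.castSucc + b i.castSucc) / 2 - (a i.succ + b i.succ) / 2|
      ≤ (∑ i : Fin n, |a i.castSucc - a i.succ| + ∑ i : Fin n, |b i.castSucc - b i.succ|) / 2 := by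
    rw [← sum_add_distrib, sum_div]
    exact sum_le_sum fun i _ =>
      (abs_add_div_two_le (a i.castSucc - a i.succ) (b i.castSucc - b i.succ)).trans_eq'
        (by congr 1; ring)
  have hlasso : ∑ i, |(a i + b i) / 2| ≤ (∑ i, |a i| + ∑ i, |b i|) / 2 := by
    rw [← sum_add_distrib, sum_div]
    exact sum_le_sum fun i _ => abs_add_div_two_le (a i) (b i)
  have hiso : ∑ i : Fin n, max ((a i.castSucc + b i.castSucc) / 2 - (a i.succ + b i.succ) / 2) 0
      ≤ (∑ i : Fin n, max (a i.castSucc - a i.succ) 0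
          + ∑ i : Fin n, max (b i.castSucc - b i.succ) 0) / 2 := by
    rw [← sum_add_distrib, sum_div]
    exact sum_le_sum fun i _ =>
      (max_add_div_two_zero_le (a i.castSucc - a i.succ) (b i.castSucc - b i.succ)).trans_eq'
        (by congr 1; ring)
  unfold flni1
  linarith [mul_le_mul_of_nonneg_left hfuse hlF, mul_le_mul_of_nonneg_left hlasso hlL,
    mul_le_mul_of_nonneg_left hiso hlNI]

lemma eq_of_forall_flni1_le {n : ℕ} (y : Fin (n + 1) → ℝ) {lF lL lNI : ℝ}
    (hlF : 0 ≤ lF) (hlL : 0 ≤ lL) (hlNI : 0 ≤ lNI) {a b : Fin (n + 1) → ℝ}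
    (ha : ∀ β, flni1 y lF lL lNI a ≤ flni1 y lF lL lNI β)
    (hb : ∀ β, flni1 y lF lL lNI b ≤ flni1 y lF lL lNI β) : a = b := by
  have hmid := flni1_midpoint_add_le y hlF hlL hlNI a b
  have hzero : ∑ i, (a i - b i) ^ 2 = 0 :=
    le_antisymm (by linarith [ha fun i => (a i + b i) / 2, ha b, hb a])
      (sum_nonneg fun i _ => sq_nonneg _)
  funext i
  have := (sum_eq_zero_iff_of_nonneg fun i _ => sq_nonneg (a i - b i)).mp hzero i (mem_univ i)
  exact sub_eq_zero.mp (pow_eq_zero_iff two_ne_zero |>.mp this)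

theorem Fin.sum_castSucc_sub_succ {M : Type*} [AddCommGroup M] (n : ℕ) (f : Fin (n + 1) → M) :
    ∑ i : Fin n, (f i.castSucc - f i.succ) = f 0 - f (Fin.last n) := by
  induction n with
  | zero => simp
  | succ n ih =>
    rw [Fin.sum_univ_castSucc]
    simp only [Fin.succ_castSucc]
    rw [ih fun i => f i.castSucc, Fin.succ_last, Fin.castSucc_zero]
    abel

/-- `Dᵀ1` for the difference matrix `D`, whose column sums telescope to `e₀ - e_last`. -/
noncomputable def differenceTransposeOne (n : ℕ) : Fin (n + 2) → ℝ :=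
  Pi.single 0 1 - Pi.single (Fin.last (n + 1)) 1

lemma sum_differenceTransposeOne_mul {n : ℕ} (x : Fin (n + 2) → ℝ) :
    ∑ i, differenceTransposeOne n i * x i = x 0 - x (Fin.last (n + 1)) := by
  simp [differenceTransposeOne, sub_mul, sum_sub_distrib, Pi.single_apply]

lemma sum_differenceTransposeOne_sq (n : ℕ) : ∑ i, differenceTransposeOne n i ^ 2 = 2 := by
  simp_rw [sq, sum_differenceTransposeOne_mul]
  norm_num [differenceTransposeOne]

lemma flni1_nearlyIsotonic_eq_fusion_shift {n : ℕ} (y : Fin (n + 2) → ℝ) (lF lNI : ℝ)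
    (β : Fin (n + 2) → ℝ) :
    flni1 y lF 0 lNI β
      = flni1 (fun i => y i - lNI / 2 * differenceTransposeOne n i) (lF + lNI / 2) 0 0 β
        + (lNI / 2 * (y 0 - y (Fin.last (n + 1))) - (lNI / 2) ^ 2) := by
  have hpos : ∑ i : Fin (n + 1), max (β i.castSucc - β i.succ) 0
      = ((β 0 - β (Fin.last (n + 1))) + ∑ i : Fin (n + 1), |β i.castSucc - β i.succ|) / 2 := by
    rw [← Fin.sum_castSucc_sub_succ, ← sum_add_distrib, sum_div]
    refine sum_congr rfl fun i _ => ?_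
    rcases le_total (β i.castSucc - β i.succ) 0 with h | h
    · rw [max_eq_right h, abs_of_nonpos h]; ring
    · rw [max_eq_left h, abs_of_nonneg h]; ring
  have hloss : ∑ i, (y i - lNI / 2 * differenceTransposeOne n i - β i) ^ 2
      = ∑ i, (y i - β i) ^ 2 - lNI * ∑ i, differenceTransposeOne n i * (y i - β i)
        + (lNI / 2) ^ 2 * ∑ i, differenceTransposeOne n i ^ 2 := by
    rw [mul_sum, mul_sum, ← sum_sub_distrib, ← sum_add_distrib]
    exact sum_congr rfl fun i _ => by ring
  unfold flni1
  rw [hpos, hloss, sum_differenceTransposeOne_mul, sum_differenceTransposeOne_sq]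
  ring

lemma nearlyIsotonic_minimizer_eq_fusion_minimizer {n : ℕ} {y : Fin (n + 2) → ℝ} {lF lNI : ℝ}
    (hlF : 0 ≤ lF) (hlNI : 0 ≤ lNI) {a b : Fin (n + 2) → ℝ}
    (ha : ∀ β, flni1 y lF 0 lNI a ≤ flni1 y lF 0 lNI β)
    (hb : ∀ β, flni1 (fun i => y i - lNI / 2 * differenceTransposeOne n i) (lF + lNI / 2) 0 0 b
      ≤ flni1 (fun i => y i - lNI / 2 * differenceTransposeOne n i) (lF + lNI / 2) 0 0 β) :
    a = b := by
  refine eq_of_forall_flni1_le _ (by positivity) le_rfl le_rfl (fun β => ?_) hb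
  have := ha β
  rw [flni1_nearlyIsotonic_eq_fusion_shift, flni1_nearlyIsotonic_eq_fusion_shift y lF lNI β] at this
  linarith

lemma cov_add_const {Ω : Type*} [MeasureSpace Ω] [IsProbabilityMeasure (ℙ : Measure Ω)]
    {U V : Ω → ℝ} (hU : MemLp U 2 ℙ) (hV : MemLp V 2 ℙ) (c : ℝ) :
    cov U (fun ω => V ω + c) = cov U V := by
  have hUV : Integrable (fun ω => U ω * V ω) ℙ := hU.integrable_mul hV
  have hUi : Integrable U ℙ := hU.integrable one_le_two
  have hVi : Integrable V ℙ := hV.integrable one_le_two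
  simp only [cov, mul_add, integral_add hUV (hUi.mul_const c), integral_mul_const,
    integral_add hVi (integrable_const c), integral_const, probReal_univ, one_smul]
  ring

theorem df_fni_unbiased_general {Ω : Type*} [MeasureSpace Ω]
    [IsProbabilityMeasure (ℙ : Measure Ω)]
    (n : ℕ) (σ : ℝ)
    (μ : Fin (n + 2) → ℝ) (ε : Fin (n + 2) → Ω → ℝ)
    (Y : Ω → Fin (n + 2) → ℝ) (hY : ∀ ω i, Y ω i = μ i + ε i ω)
    -- the fusion estimator `β̂^F(y, λ)` and its number of fused groups `K^F(y, λ)`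
    (bF : (Fin (n + 2) → ℝ) → ℝ → (Fin (n + 2) → ℝ))
    (hbF : ∀ y l β, flni1 y l 0 0 (bF y l) ≤ flni1 y l 0 0 β)
    (KF : (Fin (n + 2) → ℝ) → ℝ → ℝ)
    (hKF : ∀ y l, KF y l = 1 + (Finset.univ.filter
      (fun i : Fin (n + 1) => bF y l i.castSucc ≠ bF y l i.succ)).card)
    -- the fused nearly-isotonic estimator `β̂^{FNI}(y, λ_F, λ_NI)` and `K^{FNI}`
    (bFNI : (Fin (n + 2) → ℝ) → ℝ → ℝ → (Fin (n + 2) → ℝ))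
    (hbFNI : ∀ y lF lNI β, flni1 y lF 0 lNI (bFNI y lF lNI) ≤ flni1 y lF 0 lNI β)
    (KFNI : (Fin (n + 2) → ℝ) → ℝ → ℝ → ℝ)
    (hKFNI : ∀ y lF lNI, KFNI y lF lNI = 1 + (Finset.univ.filter
      (fun i : Fin (n + 1) => bFNI y lF lNI i.castSucc ≠ bFNI y lF lNI i.succ)).card)
    -- the known degrees-of-freedom result for the fusion estimator
    (hdfF : ∀ (μ' : Fin (n + 2) → ℝ) (l : ℝ), 0 ≤ l →
      (∀ i, MemLp (fun ω => μ' i + ε i ω) 2 ℙ) ∧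
      (∀ i, MemLp (fun ω => bF (fun j => μ' j + ε j ω) l i) 2 ℙ) ∧
      Integrable (fun ω => KF (fun j => μ' j + ε j ω) l) ℙ ∧
      (∫ ω, KF (fun j => μ' j + ε j ω) l) = (1 / σ ^ 2) *
        ∑ i, cov (fun ω => bF (fun j => μ' j + ε j ω) l i) (fun ω => μ' i + ε i ω))
    (lF lNI : ℝ) (hlF : 0 ≤ lF) (hlNI : 0 ≤ lNI) :
    (∫ ω, KFNI (Y ω) lF lNI) = (1 / σ ^ 2) *
      ∑ i, cov (fun ω => bFNI (Y ω) lF lNI i) (fun ω => Y ω i) := by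
  set d := differenceTransposeOne n
  set μ' : Fin (n + 2) → ℝ := fun i => μ i - lNI / 2 * d i
  obtain ⟨hY'L2, hbF'L2, -, hdf⟩ := hdfF μ' (lF + lNI / 2) (by positivity)
  have hY' : ∀ ω, (fun j => μ' j + ε j ω) = fun i => Y ω i - lNI / 2 * d i := fun ω => by
    funext j; rw [hY]; ring
  have hbFNI_eq : ∀ ω, bFNI (Y ω) lF lNI = bF (fun j => μ' j + ε j ω) (lF + lNI / 2) := fun ω => by
    rw [hY' ω]
    exact nearlyIsotonic_minimizer_eq_fusion_minimizer hlF hlNI (hbFNI _ _ _) (hbF _ _)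
  have hY_eq : ∀ i, (fun ω => Y ω i) = fun ω => (μ' i + ε i ω) + lNI / 2 * d i := fun i => by
    funext ω; rw [hY]; ring
  calc ∫ ω, KFNI (Y ω) lF lNI = ∫ ω, KF (fun j => μ' j + ε j ω) (lF + lNI / 2) := by
        simp only [hKFNI, hKF, hbFNI_eq]
    _ = (1 / σ ^ 2) * ∑ i, cov (fun ω => bF (fun j => μ' j + ε j ω) (lF + lNI / 2) i)
          (fun ω => μ' i + ε i ω) := hdf
    _ = _ := by simp only [hbFNI_eq, hY_eq, cov_add_const (hbF'L2 _) (hY'L2 _)]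

/-- Unbiased estimation of the degrees of freedom of the fused nearly-isotonic
estimator: if the number of fused groups `K^F` is an unbiased estimator of the
degrees of freedom of the fusion estimator `β̂^F` for every mean vector and
penalty level, then the number of fused groups `K^{FNI}` is an unbiased
estimator of the degrees of freedom of the fused nearly-isotonic estimator
`β̂^{FNI}`.  (The sample size is `n + 2 ≥ 2`, the noise is i.i.d. centered
Gaussian with variance `σ²`.) -/
theorem df_fni_unbiased {Ω : Type*} [MeasureSpace Ω]
    [IsProbabilityMeasure (ℙ : Measure Ω)]
    (n : ℕ) (σ : ℝ) (hσ : 0 < σ)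
    (μ : Fin (n + 2) → ℝ) (ε : Fin (n + 2) → Ω → ℝ)
    (hmeas : ∀ i, Measurable (ε i))
    (hindep : iIndepFun ε ℙ)
    (hgauss : ∀ i, Measure.map (ε i) ℙ = gaussianReal 0 (Real.toNNReal (σ ^ 2)))
    (Y : Ω → Fin (n + 2) → ℝ) (hY : ∀ ω i, Y ω i = μ i + ε i ω)
    -- the fusion estimator `β̂^F(y, λ)` and its number of fused groups `K^F(y, λ)`
    (bF : (Fin (n + 2) → ℝ) → ℝ → (Fin (n + 2) → ℝ))
    (hbF : ∀ y l β, flni1 y l 0 0 (bF y l) ≤ flni1 y l 0 0 β)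
    (KF : (Fin (n + 2) → ℝ) → ℝ → ℝ)
    (hKF : ∀ y l, KF y l = 1 + (Finset.univ.filter
      (fun i : Fin (n + 1) => bF y l i.castSucc ≠ bF y l i.succ)).card)
    -- the fused nearly-isotonic estimator `β̂^{FNI}(y, λ_F, λ_NI)` and `K^{FNI}`
    (bFNI : (Fin (n + 2) → ℝ) → ℝ → ℝ → (Fin (n + 2) → ℝ))
    (hbFNI : ∀ y lF lNI β, flni1 y lF 0 lNI (bFNI y lF lNI) ≤ flni1 y lF 0 lNI β)
    (KFNI : (Fin (n + 2) → ℝ) → ℝ → ℝ → ℝ)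
    (hKFNI : ∀ y lF lNI, KFNI y lF lNI = 1 + (Finset.univ.filter
      (fun i : Fin (n + 1) => bFNI y lF lNI i.castSucc ≠ bFNI y lF lNI i.succ)).card)
    -- the known degrees-of-freedom result for the fusion estimator
    (hdfF : ∀ (μ' : Fin (n + 2) → ℝ) (l : ℝ), 0 ≤ l →
      (∀ i, MemLp (fun ω => μ' i + ε i ω) 2 ℙ) ∧
      (∀ i, MemLp (fun ω => bF (fun j => μ' j + ε j ω) l i) 2 ℙ) ∧
      Integrable (fun ω => KF (fun j => μ' j + ε j ω) l) ℙ ∧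
      (∫ ω, KF (fun j => μ' j + ε j ω) l) = (1 / σ ^ 2) *
        ∑ i, cov (fun ω => bF (fun j => μ' j + ε j ω) l i) (fun ω => μ' i + ε i ω))
    (lF lNI : ℝ) (hlF : 0 ≤ lF) (hlNI : 0 ≤ lNI) :
    (∫ ω, KFNI (Y ω) lF lNI) = (1 / σ ^ 2) *
      ∑ i, cov (fun ω => bFNI (Y ω) lF lNI i) (fun ω => Y ω i) :=
  df_fni_unbiased_general n σ μ ε Y hY bF hbF KF hKF bFNI hbFNI KFNI hKFNI hdfF lF lNI hlF hlNI
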